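/- For each l ∈ {1,2} the operator H^l satisfies the quadratic Hecke relation H^l ∘ H^l = id_W + (q^{-1} - q)·H^l. -/
import Mathlib


noncomputable section

/-- The ground field `ℚ(q)`, rational functions over `ℚ`. -/
abbrev K : Type := RatFunc ℚ

/-- The variable `q ∈ ℚ(q)`. -/
def q : K := RatFunc.X

/-- The coefficients `a^l_{ij}`: for `i ≥ j`, `a^l_{ij} = q³` if `i-l` is odd and `j-l`
is even, and `q⁻¹` otherwise; for `i < j`, `a^l_{ij} = q⁻³` if `i-l` is even and `j-l`
is odd, and `q` otherwise. -/
def aco (l i j : ℤ) : K :=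
  if j ≤ i then (if Odd (i - l) ∧ Even (j - l) then q ^ (3 : ℤ) else q⁻¹)
  else (if Even (i - l) ∧ Odd (j - l) then q ^ (-3 : ℤ) else q)

/-- The free `ℚ(q)`-module `W` with basis `v_i ⊗ v_j` (`i, j ∈ ℤ`); the basis vector
`v_i ⊗ v_j` is `Finsupp.single (i, j) 1`. -/
abbrev Wmod : Type := (ℤ × ℤ) →₀ K

/-- The operator `H^l` on `W`:
`H^l(v_i ⊗ v_j) = a^l_{ij}·v_j ⊗ v_i + δ_{i<j}(q⁻¹ - q)·v_i ⊗ v_j`. -/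
def Hop (l : ℤ) : Module.End K Wmod :=
  Finsupp.lsum K fun p : ℤ × ℤ =>
    aco l p.1 p.2 • (Finsupp.lsingle (p.2, p.1) : K →ₗ[K] Wmod) +
      (if p.1 < p.2 then (q⁻¹ - q) • (Finsupp.lsingle p : K →ₗ[K] Wmod) else 0)


lemma q_ne_zero : q ≠ 0 := RatFunc.X_ne_zero

lemma Hop_single (l : ℤ) (p : ℤ × ℤ) (c : K) :
    Hop l (Finsupp.single p c) =
      aco l p.1 p.2 • Finsupp.single (p.2, p.1) c +
        (if p.1 < p.2 then (q⁻¹ - q) • Finsupp.single p c else 0) := by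
  simp only [Hop, Finsupp.lsum_single, LinearMap.add_apply, LinearMap.smul_apply,
    Finsupp.lsingle_apply]
  split_ifs <;> simp

lemma aco_diag (l i : ℤ) : aco l i i = q⁻¹ := by
  simp [aco]

lemma aco_mul (l i j : ℤ) (h : j < i) : aco l i j * aco l j i = 1 := by
  rw [aco, aco, if_pos h.le, if_neg (not_le.mpr h)]
  by_cases hp : Odd (i - l) ∧ Even (j - l)
  · rw [if_pos hp, if_pos ⟨hp.2, hp.1⟩, ← zpow_add₀ q_ne_zero]
    norm_num
  · rw [if_neg hp, if_neg (fun h' => hp ⟨h'.2, h'.1⟩), inv_mul_cancel₀ q_ne_zero]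

lemma diag_eq : q⁻¹ * q⁻¹ = 1 + (q⁻¹ - q) * q⁻¹ := by
  rw [sub_mul, mul_inv_cancel₀ q_ne_zero]
  ring

/-- For `l ∈ {1,2}` the operator `H^l` satisfies the quadratic Hecke relation
`H^l ∘ H^l = id + (q⁻¹ - q)·H^l`. -/
theorem Hop_quadratic (l : ℤ) (hl : l = 1 ∨ l = 2) :
    Hop l * Hop l = 1 + (q⁻¹ - q) • Hop l := by
  apply Finsupp.lhom_ext
  intro p c
  obtain ⟨i, j⟩ := p
  simp only [Module.End.mul_apply, LinearMap.add_apply,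
    Module.End.one_apply, LinearMap.smul_apply, Hop_single]
  rcases lt_trichotomy i j with h | h | h
  · simp only [if_pos h, if_neg (not_lt.mpr h.le), map_add, map_smul, Hop_single,
      if_pos h, if_neg (not_lt.mpr h.le), add_zero, smul_add, smul_smul,
      mul_comm (aco l i j) (aco l j i), aco_mul l j i h, one_smul]
  · subst h
    simp only [lt_irrefl, if_false, add_zero, map_smul, Hop_single, aco_diag, smul_smul]
    rw [diag_eq, add_smul, one_smul]
  · simp only [if_neg (not_lt.mpr h.le), if_pos h, add_zero, map_smul, Hop_single,
      if_pos h, if_neg (not_lt.mpr h.le), add_zero, smul_add, smul_smul,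
      aco_mul l i j h, one_smul]
    rw [mul_comm]

end
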